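/- arXiv:1703.07391 — 4 statements merged into one kernel-verified Lean document; each statement's English description precedes it below -/
import Mathlib

section
/- Let R be a Noetherian ring, C = ⨁_{e≥0} C_e an ℕ-graded ring with C_0 = R satisfying rφ = φ r^{p^e} for homogeneous φ of degree e (a Cartier algebra), and M a C-module that is finitely generated over R. Then the descending chain C_+ M ⊇ C_+^2 M ⊇ C_+^3 M ⊇ ⋯ stabilizes, where C_+ = ⨁_{e≥1} C_e. -/
variable {R : Type*} [CommRing R] {M : Type*} [AddCommGroup M] [Module R M]

/-- One application of the positive part of a Cartier algebra `C` to a submodule: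
the submodule generated by `φ(N)` for all `φ ∈ C_e`, `e ≥ 1`. Iterating `h` times
yields `C_+^h M`. -/
def cPlusStep (C : ℕ → Set (M →+ M)) (N : Submodule R M) : Submodule R M :=
  Submodule.span R (⋃ e ∈ Set.Ici 1, ⋃ φ ∈ C e, ⇑φ '' (N : Set M))

/-!
Put `N_n = C_+^n A` for a `C_+`-stable submodule `A` and `T = ⋂ N_n`, and argue by Noetherian
induction on the ideal `(T : A)`. If `𝔭` is a minimal prime over `(T : A)`, then `(A / T)_𝔭` has
finite length, so the localized chain stabilizes: `s N_n ⊆ N_{n+1}` for some `n` and `s ∉ 𝔭`.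
Since `s φ(x) = φ(s^{p^e} x)` with `p^e ≥ 2`, this propagates down the chain to `s² N_n ⊆ T`, so
the ideal `(T : N_n)` strictly contains `(T : A)`, and the chain starting at `N_n` stabilizes by
induction.
-/

theorem Module.isArtinian_of_isArtinianRing_quotient_annihilator [Module.Finite R M]
    [IsArtinianRing (R ⧸ Module.annihilator R M)] : IsArtinian R M := by
  let _ := Module.quotientAnnihilator (R := R) (M := M)
  have : Module.Finite (R ⧸ Module.annihilator R M) M :=
    Module.Finite.of_restrictScalars_finite R _ M
  exact isArtinian_of_surjective_algebraMap (R := R ⧸ Module.annihilator R M)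
    Ideal.Quotient.mk_surjective

theorem LocalizedModule.annihilator_le (S : Submonoid R) :
    Module.annihilator R M ≤ Module.annihilator R (LocalizedModule S M) := by
  intro r hr
  rw [Module.mem_annihilator] at hr ⊢
  intro x
  induction x using LocalizedModule.induction_on with
  | h m s => rw [LocalizedModule.smul'_mk, hr, LocalizedModule.zero_mk]

theorem isArtinian_localizedModule_of_mem_minimalPrimes [IsNoetherianRing R] [Module.Finite R M]
    {p : Ideal R} [p.IsPrime] (hp : p ∈ (Module.annihilator R M).minimalPrimes) :
    IsArtinian (Localization.AtPrime p) (LocalizedModule p.primeCompl M) := by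
  set Rp := Localization.AtPrime p
  set J := Module.annihilator Rp (LocalizedModule p.primeCompl M)
  have : Nontrivial (LocalizedModule p.primeCompl M) := by
    simpa [← Module.mem_support_iff (p := ⟨p, ‹_›⟩), Module.support_eq_zeroLocus]
      using! hp.1.2
  have hmap : (Module.annihilator R M).map (algebraMap R Rp) ≤ J := by
    rw [Ideal.map_le_iff_le_comap, Module.comap_annihilator]
    exact LocalizedModule.annihilator_le _
  have hJ : J.radical = IsLocalRing.maximalIdeal Rp := by
    refine le_antisymm (IsLocalRing.le_maximalIdeal ?_) ?_
    · rw [ne_eq, Ideal.radical_eq_top, Module.annihilator_eq_top_iff,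
        not_subsingleton_iff_nontrivial]
      infer_instance
    · rw [← Localization.AtPrime.map_eq_maximalIdeal,
        ← IsLocalization.AtPrime.radical_map_of_mem_minimalPrimes Rp p _ hp]
      exact Ideal.radical_mono hmap
  have : IsArtinianRing (Rp ⧸ J) :=
    IsLocalRing.quotient_artinian_of_mem_minimalPrimes_of_isLocalRing J
      (by rw [← Ideal.radical_minimalPrimes, hJ, Ideal.minimalPrimes_eq_subsingleton_self]; rfl)
  have : Module.Finite Rp (LocalizedModule p.primeCompl M) :=
    Module.Finite.of_isLocalizedModule p.primeCompl (LocalizedModule.mkLinearMap p.primeCompl M)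
  exact Module.isArtinian_of_isArtinianRing_quotient_annihilator

theorem Submodule.exists_smul_mem_of_localized_le {S : Submonoid R} {P Q : Submodule R M}
    (hP : P.FG) (h : P.localized S ≤ Q.localized S) : ∃ s ∈ S, ∀ x ∈ P, s • x ∈ Q := by
  classical
  obtain ⟨G, rfl⟩ := hP
  have hG : ∀ g ∈ G, ∃ t ∈ S, t • g ∈ Q := by
    intro g hg
    obtain ⟨m, hm, s, hms⟩ := h ⟨g, subset_span hg, 1, IsLocalizedModule.mk'_one S _ g⟩
    rw [IsLocalizedModule.mk'_eq_iff, Submonoid.smul_def, ← map_smul] at hms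
    obtain ⟨u, hu⟩ := IsLocalizedModule.exists_of_eq (S := S) hms
    refine ⟨u * s, mul_mem u.2 s.2, ?_⟩
    rw [mul_smul, ← Submonoid.smul_def, ← hu]
    exact Q.smul_mem _ hm
  choose! t htS htQ using hG
  refine ⟨∏ g ∈ G, t g, prod_mem htS, fun x hx => ?_⟩
  suffices span R G ≤ Q.comap ((∏ g ∈ G, t g) • LinearMap.id) from this hx
  refine span_le.2 fun g hg => ?_
  simp only [SetLike.mem_coe, mem_comap, LinearMap.smul_apply, LinearMap.id_coe, id_eq]
  rw [← Finset.prod_erase_mul G t hg, mul_smul]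
  exact Q.smul_mem _ (htQ g hg)

theorem exists_smul_mem_succ_of_mem_minimalPrimes_annihilator [IsNoetherianRing R]
    [Module.Finite R M] {p : Ideal R} (hp : p ∈ (Module.annihilator R M).minimalPrimes)
    {N : ℕ → Submodule R M} (hN : Antitone N) :
    ∃ n, ∃ s ∉ p, ∀ x ∈ N n, s • x ∈ N (n + 1) := by
  have := hp.isPrime
  have := isArtinian_localizedModule_of_mem_minimalPrimes hp
  obtain ⟨n, hn⟩ := IsArtinian.monotone_stabilizes
    ⟨fun n => OrderDual.toDual ((N n).localized p.primeCompl),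
      fun _ _ h => (Submodule.localized'gi _ _ _).gc.monotone_l (hN h)⟩
  have hloc : (N n).localized p.primeCompl = (N (n + 1)).localized p.primeCompl :=
    hn (n + 1) n.le_succ
  obtain ⟨s, hs, hsN⟩ := Submodule.exists_smul_mem_of_localized_le
    (IsNoetherian.noetherian (N n)) hloc.le
  exact ⟨n, s, hs, hsN⟩

theorem exists_smul_mem_succ_of_mem_minimalPrimes_colon [IsNoetherianRing R]
    [Module.Finite R M] {T A : Submodule R M} {p : Ideal R}
    (hp : p ∈ (T.colon (A : Set M)).minimalPrimes) {N : ℕ → Submodule R M} (hN : Antitone N)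
    (hTN : ∀ n, T ≤ N n) (hNA : ∀ n, N n ≤ A) :
    ∃ n, ∃ s ∉ p, ∀ x ∈ N n, s • x ∈ N (n + 1) := by
  rw [← Submodule.annihilator_map_mkQ_eq_colon] at hp
  obtain ⟨n, s, hs, hsN⟩ := exists_smul_mem_succ_of_mem_minimalPrimes_annihilator hp
    (N := fun n => ((N n).map T.mkQ).comap (A.map T.mkQ).subtype)
    (fun _ _ h => Submodule.comap_mono (Submodule.map_mono (hN h)))
  refine ⟨n, s, hs, fun x hx => ?_⟩
  have := hsN ⟨T.mkQ x, Submodule.mem_map_of_mem (hNA n hx)⟩ (Submodule.mem_map_of_mem hx)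
  rwa [Submodule.mem_comap, Submodule.subtype_apply, Submodule.coe_smul, ← map_smul,
    ← Submodule.mem_comap, Submodule.comap_map_mkQ, sup_eq_right.2 (hTN _)] at this

section Cartier

variable {C : ℕ → Set (M →+ M)}

theorem mem_cPlusStep {e : ℕ} (he : 1 ≤ e) {φ : M →+ M} (hφ : φ ∈ C e)
    {N : Submodule R M} {x : M} (hx : x ∈ N) : φ x ∈ cPlusStep C N :=
  Submodule.subset_span <| Set.mem_biUnion (Set.mem_Ici.2 he) <|
    Set.mem_biUnion hφ ⟨x, hx, rfl⟩

theorem cPlusStep_le {N K : Submodule R M}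
    (h : ∀ e, 1 ≤ e → ∀ φ ∈ C e, ∀ x ∈ N, φ x ∈ K) : cPlusStep C N ≤ K := by
  rw [cPlusStep, Submodule.span_le]
  rintro _ ⟨_, ⟨e, rfl⟩, _, ⟨he, rfl⟩, _, ⟨φ, rfl⟩, _, ⟨hφ, rfl⟩, x, hx, rfl⟩
  exact h e he φ hφ x hx

theorem cPlusStep_mono : Monotone (cPlusStep (R := R) C) := fun _ _ h =>
  cPlusStep_le fun _ he _ hφ _ hx => mem_cPlusStep he hφ (h hx)

variable {p : ℕ} (hsemi : ∀ e : ℕ, ∀ φ ∈ C e, ∀ (r : R) (m : M), φ (r ^ p ^ e • m) = r • φ m)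
include hsemi

theorem smul_mem_cPlusStep {k : ℕ} (hk : k ≤ p) {r : R} {N N' : Submodule R M}
    (h : ∀ x ∈ N, r ^ k • x ∈ N') : ∀ y ∈ cPlusStep C N, r • y ∈ cPlusStep C N' := by
  suffices cPlusStep C N ≤ (cPlusStep C N').comap (r • LinearMap.id) from fun y hy => this hy
  refine cPlusStep_le fun e he φ hφ x hx => ?_
  have hke : k ≤ p ^ e := hk.trans (Nat.le_self_pow (by omega) p)
  rw [Submodule.mem_comap, LinearMap.smul_apply, LinearMap.id_apply, ← hsemi e φ hφ,
    ← Nat.sub_add_cancel hke, pow_add, mul_smul]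
  exact mem_cPlusStep he hφ (N'.smul_mem _ (h x hx))

theorem sq_smul_mem_iterate_cPlusStep (hp : 2 ≤ p) {s : R} {N : Submodule R M}
    (hs : ∀ x ∈ N, s • x ∈ cPlusStep C N) : ∀ k, ∀ x ∈ N, s ^ 2 • x ∈ (cPlusStep C)^[k] N
  | 0 => fun _ hx => N.smul_mem _ hx
  | k + 1 => fun x hx => by
    rw [Function.iterate_succ_apply', pow_two, mul_smul]
    exact smul_mem_cPlusStep hsemi hp (sq_smul_mem_iterate_cPlusStep hp hs k) _ (hs x hx)

theorem exists_iterate_cPlusStep_eq [IsNoetherianRing R] [Module.Finite R M] (hp : 2 ≤ p)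
    (A : Submodule R M) (hA : cPlusStep C A ≤ A) :
    ∃ n₀, ∀ n, n₀ ≤ n → (cPlusStep C)^[n] A = (cPlusStep C)^[n₀] A := by
  induction A using (InvImage.wf (fun A : Submodule R M =>
      (⨅ k, (cPlusStep C)^[k] A).colon (A : Set M)) wellFounded_gt).induction with
  | _ A ih => ?_
  set N : ℕ → Submodule R M := fun n => (cPlusStep C)^[n] A
  have hN : Antitone N := cPlusStep_mono.antitone_iterate_of_map_le hA
  have hNsucc (n : ℕ) : N (n + 1) = cPlusStep C (N n) := Function.iterate_succ_apply' _ n A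
  set T := ⨅ k, N k
  by_cases htop : T.colon (A : Set M) = ⊤
  · refine ⟨0, fun n _ => le_antisymm (hN (Nat.zero_le n)) fun x hx => ?_⟩
    have hxT : (1 : R) • x ∈ T := Submodule.mem_colon.1 (htop ▸ Submodule.mem_top) x hx
    exact iInf_le N n (one_smul R x ▸ hxT)
  obtain ⟨q, hq⟩ := Ideal.nonempty_minimalPrimes htop
  obtain ⟨n, s, hs, hsN⟩ := exists_smul_mem_succ_of_mem_minimalPrimes_colon hq hN
    (fun n => iInf_le N n) (fun n => hN (Nat.zero_le n))
  rw [hNsucc] at hsN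
  have hT : T ≤ ⨅ k, (cPlusStep C)^[k] (N n) :=
    le_iInf fun k => (iInf_le N (k + n)).trans_eq (Function.iterate_add_apply _ k n A)
  have hs2 : s ^ 2 ∈ (⨅ k, (cPlusStep C)^[k] (N n)).colon (N n : Set M) :=
    Submodule.mem_colon.2 fun x hx => Submodule.mem_iInf _ |>.2 fun k =>
      sq_smul_mem_iterate_cPlusStep hsemi hp hsN k x hx
  have hlt : T.colon (A : Set M) < (⨅ k, (cPlusStep C)^[k] (N n)).colon (N n : Set M) :=
    lt_of_le_of_ne (Submodule.colon_mono hT (hN (Nat.zero_le n)))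
      fun h => hs (hq.isPrime.mem_of_pow_mem 2 (hq.1.2 (h ▸ hs2)))
  obtain ⟨k₀, hk₀⟩ := ih (N n) hlt ((hNsucc n).symm.trans_le (hN n.le_succ))
  refine ⟨k₀ + n, fun m hm => ?_⟩
  have := hk₀ (m - n) (by omega)
  rwa [← Function.iterate_add_apply, ← Function.iterate_add_apply, Nat.sub_add_cancel (by omega)]
    at this

end Cartier

/-- Blickle's stabilization: for a Noetherian ring `R` of characteristic `p`, a Cartier
algebra `C` (with `C_0 = R`, encoded by the semilinearity and composition rules) acting
on a finitely generated `R`-module `M`, the descending chain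
`C_+ M ⊇ C_+² M ⊇ ⋯` stabilizes. -/
theorem cartier_chain_stabilizes (p : ℕ) (hp : p.Prime) [IsNoetherianRing R]
    [Module.Finite R M] (C : ℕ → Set (M →+ M))
    (hsemi : ∀ e : ℕ, ∀ φ ∈ C e, ∀ (r : R) (m : M), φ (r ^ p ^ e • m) = r • φ m) :
    ∃ h₀ : ℕ, ∀ h : ℕ, h₀ ≤ h →
      (cPlusStep C)^[h] (⊤ : Submodule R M) = (cPlusStep C)^[h₀] (⊤ : Submodule R M) :=
  exists_iterate_cPlusStep_eq hsemi hp.two_le ⊤ le_top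
end

section
/- Let R be F-finite of characteristic p, (M, κ) a Cartier module (κ : F_* M → M R-linear, M finitely generated), f ∈ R an M-regular element, and λ ≥ 0 rational. Let C_+ be generated by the maps κ^e f^{⌈λ(p^e−1)⌉} for e ≥ 1, and set σ(M, f^λ) = C_+^h M for h ≫ 0. Then for all sufficiently large a with λ(p^a − 1) ∈ ℤ one has σ(M, f^λ) = κ^a f^{λ(p^a−1)} M. -/
open Function

variable {R : Type*} [CommRing R] {M : Type*} [AddCommGroup M] [Module R M]

/-- The submodule `κ^e (f^n • N)` (as a span, which coincides with the image for a
`p^{-e}`-linear `κ`). -/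
def opApply (κ : M →+ M) (f : R) (e n : ℕ) (N : Submodule R M) : Submodule R M :=
  Submodule.span R ((⇑κ)^[e] '' ((fun m => f ^ n • m) '' (N : Set M)))

/-- One application of the positive part of the Cartier algebra generated by the
`κ^e f^{⌈λ(p^e−1)⌉}`, `e ≥ 1`; iterating gives `C_+^h M`. -/
def cStep (p : ℕ) (κ : M →+ M) (f : R) (lam : ℚ) (N : Submodule R M) : Submodule R M :=
  ⨆ e : ℕ, ⨆ _ : 1 ≤ e, opApply κ f e (⌈lam * ((p : ℚ) ^ e - 1)⌉).toNat N

/-!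
Write `v(e) = λ(p^e − 1)`, so that `v(s + t) = v(s) p^t + v(t)`. Since `κ^s f^n κ^t = κ^(s+t) f^(n p^t)`,
the generators compose as `κ^s f^⌈v(s)⌉ ∘ κ^t f^⌈v(t)⌉ = κ^(s+t) f^(⌈v(s)⌉ p^t + ⌈v(t)⌉)`, and this
exponent is `≥ ⌈v(s+t)⌉`, with equality when `v(s)` and `v(t)` are integers. Hence `C_+^h M` lies in the
sum of the `κ^e f^⌈v(e)⌉ M` over `e ≥ h`, each of which lies in `κ^a f^v(a) M` once `a ≤ e` and `v(a)` is
an integer; this gives `σ ⊆ κ^a f^v(a) M`. Conversely, if `c ≥ 1` has `v(c) ∈ ℤ`, then every `a > h₀ c`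
with `v(a) ∈ ℤ` is `h₀ c + r` with `r ≥ 1`, `v(r) ∈ ℤ`, and `κ^a f^v(a) = (κ^c f^v(c))^h₀ κ^r f^v(r)`
is a product of `h₀ + 1` generators, so `κ^a f^v(a) M ⊆ C_+^(h₀+1) M = σ`.
-/

def fExponent (p : ℕ) (lam : ℚ) (e : ℕ) : ℕ := ⌈lam * ((p : ℚ) ^ e - 1)⌉.toNat

def HasIntegralExponent (p : ℕ) (lam : ℚ) (e : ℕ) : Prop := ∃ k : ℤ, lam * ((p : ℚ) ^ e - 1) = k

lemma mul_pow_add_sub_one {K : Type*} [CommRing K] (lam x : K) (s t : ℕ) :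
    lam * (x ^ (s + t) - 1) = lam * (x ^ s - 1) * x ^ t + lam * (x ^ t - 1) := by
  rw [pow_add]; ring

section Exponent

variable {p : ℕ} {lam : ℚ}

lemma HasIntegralExponent.add {s t : ℕ} (hs : HasIntegralExponent p lam s)
    (ht : HasIntegralExponent p lam t) : HasIntegralExponent p lam (s + t) := by
  obtain ⟨ks, hks⟩ := hs
  obtain ⟨kt, hkt⟩ := ht
  exact ⟨ks * (p : ℤ) ^ t + kt, by rw [mul_pow_add_sub_one, hks, hkt]; push_cast; ring⟩

lemma HasIntegralExponent.of_add_left {s t : ℕ} (hs : HasIntegralExponent p lam s)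
    (hst : HasIntegralExponent p lam (s + t)) : HasIntegralExponent p lam t := by
  obtain ⟨ks, hks⟩ := hs
  obtain ⟨kst, hkst⟩ := hst
  refine ⟨kst - ks * (p : ℤ) ^ t, ?_⟩
  rw [mul_pow_add_sub_one, hks] at hkst
  push_cast
  linarith

lemma HasIntegralExponent.mul_left {c : ℕ} (hc : HasIntegralExponent p lam c) (j : ℕ) :
    HasIntegralExponent p lam (j * c) := by
  induction j with
  | zero => exact ⟨0, by simp⟩
  | succ j ih => simpa [Nat.succ_mul] using ih.add hc

lemma fExponent_add_le (s t : ℕ) :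
    fExponent p lam (s + t) ≤ fExponent p lam s * p ^ t + fExponent p lam t := by
  unfold fExponent
  refine Int.toNat_le.2 (Int.ceil_le.2 ?_)
  rw [mul_pow_add_sub_one]
  push_cast
  gcongr
  · exact (Int.le_ceil _).trans (mod_cast Int.self_le_toNat _)
  · exact (Int.le_ceil _).trans (mod_cast Int.self_le_toNat _)

lemma mul_pow_sub_one_nonneg (hp : 0 < p) (hlam : 0 ≤ lam) (e : ℕ) : 0 ≤ lam * ((p : ℚ) ^ e - 1) :=
  mul_nonneg hlam (sub_nonneg.2 (one_le_pow₀ (mod_cast hp)))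

lemma HasIntegralExponent.cast_fExponent (hp : 0 < p) (hlam : 0 ≤ lam) {e : ℕ} (he : HasIntegralExponent p lam e) :
    (fExponent p lam e : ℚ) = lam * ((p : ℚ) ^ e - 1) := by
  obtain ⟨k, hk⟩ := he
  have hk0 : (0 : ℚ) ≤ k := hk ▸ mul_pow_sub_one_nonneg hp hlam e
  rw [fExponent, hk, Int.ceil_intCast, ← Int.cast_natCast, Int.toNat_of_nonneg (mod_cast hk0)]

lemma fExponent_add (hp : 0 < p) (hlam : 0 ≤ lam) {s t : ℕ} (hs : HasIntegralExponent p lam s)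
    (ht : HasIntegralExponent p lam t) :
    fExponent p lam (s + t) = fExponent p lam s * p ^ t + fExponent p lam t := by
  have h := (hs.add ht).cast_fExponent hp hlam
  rw [mul_pow_add_sub_one, ← hs.cast_fExponent hp hlam, ← ht.cast_fExponent hp hlam] at h
  exact_mod_cast h

lemma fExponent_mul_pow_le (hp : 0 < p) (hlam : 0 ≤ lam) {s : ℕ} (hs : HasIntegralExponent p lam s) (t : ℕ) :
    fExponent p lam s * p ^ t ≤ fExponent p lam (s + t) := by
  obtain ⟨k, hk⟩ := hs
  have hk0 : (0 : ℚ) ≤ k := hk ▸ mul_pow_sub_one_nonneg hp hlam s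
  have hle : k * (p : ℤ) ^ t ≤ ⌈lam * ((p : ℚ) ^ (s + t) - 1)⌉ := by
    refine Int.le_ceil_iff.2 ?_
    rw [mul_pow_add_sub_one, hk]
    push_cast
    linarith [mul_pow_sub_one_nonneg hp hlam t]
  unfold fExponent
  rw [hk, Int.ceil_intCast]
  zify
  rw [Int.toNat_of_nonneg (mod_cast hk0)]
  exact hle.trans (Int.self_le_toNat _)

end Exponent

section CartierOperators

variable {p : ℕ} {κ : M →+ M} {f : R}

lemma iterate_smul_pow_pow (hκ : ∀ (r : R) (m : M), κ (r ^ p • m) = r • κ m)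
    (e : ℕ) (r : R) (m : M) : (⇑κ)^[e] (r ^ p ^ e • m) = r • (⇑κ)^[e] m := by
  induction e generalizing m with
  | zero => simp
  | succ e ih =>
    rw [iterate_succ_apply, iterate_succ_apply, pow_succ, pow_mul, hκ, ih]

lemma mem_opApply (hκ : ∀ (r : R) (m : M), κ (r ^ p • m) = r • κ m)
    {e n : ℕ} {N : Submodule R M} {x : M} :
    x ∈ opApply κ f e n N ↔ ∃ m ∈ N, (⇑κ)^[e] (f ^ n • m) = x := by
  let image : Submodule R M :=
    { carrier := {x | ∃ m ∈ N, (⇑κ)^[e] (f ^ n • m) = x}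
      zero_mem' := ⟨0, N.zero_mem, by simp⟩
      add_mem' := by
        rintro _ _ ⟨m, hm, rfl⟩ ⟨m', hm', rfl⟩
        exact ⟨m + m', N.add_mem hm hm', by rw [smul_add, iterate_map_add]⟩
      smul_mem' := by
        rintro r _ ⟨m, hm, rfl⟩
        exact ⟨r ^ p ^ e • m, N.smul_mem _ hm, by rw [smul_comm, iterate_smul_pow_pow hκ]⟩ }
  have h : opApply κ f e n N = image := by
    rw [opApply, Set.image_image]
    exact Submodule.span_eq image
  rw [h]
  rfl

lemma opApply_mono (hκ : ∀ (r : R) (m : M), κ (r ^ p • m) = r • κ m)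
    {e n : ℕ} {N N' : Submodule R M} (h : N ≤ N') :
    opApply κ f e n N ≤ opApply κ f e n N' := by
  intro x hx
  obtain ⟨m, hm, rfl⟩ := (mem_opApply hκ).1 hx
  exact (mem_opApply hκ).2 ⟨m, h hm, rfl⟩

lemma opApply_le_of_exponent_le (hκ : ∀ (r : R) (m : M), κ (r ^ p • m) = r • κ m)
    {e n n' : ℕ} (h : n ≤ n') (N : Submodule R M) :
    opApply κ f e n' N ≤ opApply κ f e n N := by
  intro x hx
  obtain ⟨m, hm, rfl⟩ := (mem_opApply hκ).1 hx
  refine (mem_opApply hκ).2 ⟨f ^ (n' - n) • m, N.smul_mem _ hm, ?_⟩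
  rw [smul_smul, ← pow_add, Nat.add_sub_cancel' h]

lemma opApply_opApply (hκ : ∀ (r : R) (m : M), κ (r ^ p • m) = r • κ m)
    (e₁ n₁ e₂ n₂ : ℕ) (N : Submodule R M) :
    opApply κ f e₁ n₁ (opApply κ f e₂ n₂ N) = opApply κ f (e₁ + e₂) (n₁ * p ^ e₂ + n₂) N := by
  have hcomp (m : M) : (⇑κ)^[e₁] (f ^ n₁ • (⇑κ)^[e₂] (f ^ n₂ • m))
      = (⇑κ)^[e₁ + e₂] (f ^ (n₁ * p ^ e₂ + n₂) • m) := by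
    rw [← iterate_smul_pow_pow hκ e₂ (f ^ n₁), ← iterate_add_apply, ← pow_mul, smul_smul,
      ← pow_add]
  ext x
  simp only [mem_opApply hκ]
  constructor
  · rintro ⟨_, ⟨m, hm, rfl⟩, rfl⟩
    exact ⟨m, hm, (hcomp m).symm⟩
  · rintro ⟨m, hm, rfl⟩
    exact ⟨_, ⟨m, hm, rfl⟩, hcomp m⟩

lemma opApply_iSup_le (hκ : ∀ (r : R) (m : M), κ (r ^ p • m) = r • κ m)
    (e n : ℕ) {ι : Sort*} (N : ι → Submodule R M) :
    opApply κ f e n (⨆ i, N i) ≤ ⨆ i, opApply κ f e n (N i) := by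
  intro x hx
  obtain ⟨m, hm, rfl⟩ := (mem_opApply hκ).1 hx
  clear hx
  induction hm using Submodule.iSup_induction' with
  | mem i y hy => exact Submodule.mem_iSup_of_mem i ((mem_opApply hκ).2 ⟨y, hy, rfl⟩)
  | zero => simp
  | add y y' _ _ hy hy' =>
    rw [smul_add, iterate_map_add]
    exact add_mem hy hy'

end CartierOperators

section CartierAlgebra

variable {p : ℕ} {κ : M →+ M} {f : R} {lam : ℚ}

lemma opApply_le_cStep {e : ℕ} (he : 1 ≤ e) (N : Submodule R M) :
    opApply κ f e (fExponent p lam e) N ≤ cStep p κ f lam N :=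
  le_iSup₂_of_le e he le_rfl

lemma cStep_mono (hκ : ∀ (r : R) (m : M), κ (r ^ p • m) = r • κ m)
    {N N' : Submodule R M} (h : N ≤ N') : cStep p κ f lam N ≤ cStep p κ f lam N' :=
  iSup₂_mono fun _ _ => opApply_mono hκ h

lemma iterate_cStep_top_le_iSup (hκ : ∀ (r : R) (m : M), κ (r ^ p • m) = r • κ m) (h : ℕ) :
    (cStep p κ f lam)^[h] ⊤ ≤ ⨆ e, ⨆ _ : h ≤ e, opApply κ f e (fExponent p lam e) ⊤ := by
  induction h with
  | zero =>
    refine le_iSup₂_of_le 0 le_rfl fun x _ => (mem_opApply hκ).2 ⟨x, trivial, ?_⟩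
    simp [fExponent]
  | succ h ih =>
    rw [iterate_succ_apply']
    refine (cStep_mono hκ ih).trans (iSup₂_le fun e₁ he₁ => ?_)
    refine (opApply_iSup_le hκ _ _ _).trans (iSup_le fun e => ?_)
    refine (opApply_iSup_le hκ _ _ _).trans (iSup_le fun he => ?_)
    rw [opApply_opApply hκ]
    exact (opApply_le_of_exponent_le hκ (fExponent_add_le e₁ e) _).trans
      (le_iSup₂_of_le (e₁ + e) (by omega) le_rfl)

lemma opApply_fExponent_add_le (hκ : ∀ (r : R) (m : M), κ (r ^ p • m) = r • κ m)
    (hp : 0 < p) (hlam : 0 ≤ lam) {a : ℕ} (ha : HasIntegralExponent p lam a) (t : ℕ) :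
    opApply κ f (a + t) (fExponent p lam (a + t)) ⊤ ≤ opApply κ f a (fExponent p lam a) ⊤ := by
  refine (opApply_le_of_exponent_le hκ (fExponent_mul_pow_le hp hlam ha t) _).trans ?_
  have h := opApply_opApply hκ (f := f) a (fExponent p lam a) t 0 ⊤
  rw [add_zero] at h
  exact h ▸ opApply_mono hκ le_top

lemma iterate_cStep_top_le_opApply (hκ : ∀ (r : R) (m : M), κ (r ^ p • m) = r • κ m)
    (hp : 0 < p) (hlam : 0 ≤ lam) {a h : ℕ} (ha : HasIntegralExponent p lam a) (hah : a ≤ h) :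
    (cStep p κ f lam)^[h] ⊤ ≤ opApply κ f a (fExponent p lam a) ⊤ := by
  refine (iterate_cStep_top_le_iSup hκ h).trans (iSup₂_le fun e he => ?_)
  obtain ⟨t, rfl⟩ := Nat.exists_eq_add_of_le (hah.trans he)
  exact opApply_fExponent_add_le hκ hp hlam ha t

lemma opApply_le_iterate_cStep (hκ : ∀ (r : R) (m : M), κ (r ^ p • m) = r • κ m)
    (hp : 0 < p) (hlam : 0 ≤ lam) {c r : ℕ} (hc1 : 1 ≤ c) (hc : HasIntegralExponent p lam c)
    (hr1 : 1 ≤ r) (hr : HasIntegralExponent p lam r) (j : ℕ) (N : Submodule R M) :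
    opApply κ f (j * c + r) (fExponent p lam (j * c + r)) N ≤ (cStep p κ f lam)^[j + 1] N := by
  induction j with
  | zero => simpa using opApply_le_cStep hr1 N
  | succ j ih =>
    have hsplit : (j + 1) * c + r = c + (j * c + r) := by ring
    rw [hsplit, fExponent_add hp hlam hc ((hc.mul_left j).add hr), ← opApply_opApply hκ,
      iterate_succ_apply']
    exact (opApply_mono hκ ih).trans (opApply_le_cStep hc1 _)

end CartierAlgebra

theorem sigma_simple_description_general (p : ℕ) (hp : p.Prime)
    (κ : M →+ M) (hκ : ∀ (r : R) (m : M), κ (r ^ p • m) = r • κ m)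
    (f : R)
    (lam : ℚ) (hlam : 0 ≤ lam)
    (σ : Submodule R M) (h₀ : ℕ)
    (hσ : ∀ h : ℕ, h₀ ≤ h → (cStep p κ f lam)^[h] (⊤ : Submodule R M) = σ) :
    ∃ a₀ : ℕ, ∀ a : ℕ, a₀ ≤ a → (∃ k : ℤ, lam * ((p : ℚ) ^ a - 1) = k) →
      σ = opApply κ f a (⌈lam * ((p : ℚ) ^ a - 1)⌉).toNat (⊤ : Submodule R M) := by
  by_cases hc : ∃ c, 1 ≤ c ∧ HasIntegralExponent p lam c
  · obtain ⟨c, hc1, hc⟩ := hc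
    refine ⟨h₀ * c + 1, fun a ha ha_int => le_antisymm ?_ ?_⟩
    · rw [← hσ (max h₀ a) (le_max_left _ _)]
      exact iterate_cStep_top_le_opApply hκ hp.pos hlam ha_int (le_max_right _ _)
    · obtain ⟨r, rfl⟩ := Nat.exists_eq_add_of_le (Nat.le_of_succ_le ha)
      have hr : HasIntegralExponent p lam r := (hc.mul_left h₀).of_add_left ha_int
      exact (opApply_le_iterate_cStep hκ hp.pos hlam hc1 hc (by omega) hr h₀ ⊤).trans
        (hσ (h₀ + 1) (by omega)).le
  · exact ⟨1, fun a ha ha_int => absurd ⟨a, ha, ha_int⟩ hc⟩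

/-- Simple description of the non-F-pure submodule `σ(M, f^λ)` (Lemma 4.3): if
`σ = C_+^h M` for all `h ≫ 0`, then for all sufficiently large `a` with
`λ(p^a − 1) ∈ ℤ` one has `σ(M, f^λ) = κ^a f^{λ(p^a−1)} M`. -/
theorem sigma_simple_description (p : ℕ) (hp : p.Prime) [CharP R p]
    (κ : M →+ M) (hκ : ∀ (r : R) (m : M), κ (r ^ p • m) = r • κ m)
    (f : R) (hf : ∀ m : M, f • m = 0 → m = 0)
    (lam : ℚ) (hlam : 0 ≤ lam)
    (σ : Submodule R M) (h₀ : ℕ)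
    (hσ : ∀ h : ℕ, h₀ ≤ h → (cStep p κ f lam)^[h] (⊤ : Submodule R M) = σ) :
    ∃ a₀ : ℕ, ∀ a : ℕ, a₀ ≤ a → (∃ k : ℤ, lam * ((p : ℚ) ^ a - 1) = k) →
      σ = opApply κ f a (⌈lam * ((p : ℚ) ^ a - 1)⌉).toNat (⊤ : Submodule R M) :=
  sigma_simple_description_general p hp κ hκ f lam hlam σ h₀ hσ
end

section
/- Let R be essentially of finite type over an F-finite field, (M, κ) a Cartier module, f ∈ R, and a_e(λ) an integer. The map κ^e f^{a_e(λ)} induces a well-defined Cartier structure on Gr^λ M = τ(M, f^{λ−ε})/τ(M, f^λ) (for 0 < ε ≪ 1) if and only if a_e(λ) ≥ ⌈λ(p^e − 1)⌉. -/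
/-!
By the Briançon–Skoda identity the two conditions say `τ((λ - ε + a)/p^e) ≤ τ(λ - ε)` and
`τ((λ + a)/p^e) ≤ τ(λ)`. If `a ≥ λ(p^e - 1)` then `(x + a)/p^e ≥ x` for `x = λ - ε, λ`, so
both follow from monotonicity. Otherwise `(λ + a)/p^e < λ`, and since `λ` is a jumping number,
`τ(μ)` strictly contains `τ(λ)` for every `0 ≤ μ < λ`.
-/

open Function

variable {R : Type*} [CommRing R] {M : Type*} [AddCommGroup M] [Module R M]

lemma le_add_div_iff_mul_sub_one_le {x q : ℚ} (a : ℚ) (hq : 0 < q) :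
    x ≤ (x + a) / q ↔ x * (q - 1) ≤ a := by
  rw [le_div_iff₀ hq]
  constructor <;> intro h <;> linarith

lemma AntitoneOn.lt_of_lt_of_jump {α : Type*} [PartialOrder α] {τ : ℚ → α}
    (hanti : AntitoneOn τ (Set.Ici 0)) {lam ε : ℚ} (hε : 0 < ε) (hεlam : ε ≤ lam)
    (hsmall : ∀ ε' : ℚ, 0 < ε' → ε' ≤ ε → τ (lam - ε') = τ (lam - ε))
    (hjump : τ lam ≠ τ (lam - ε)) {μ : ℚ} (hμ0 : 0 ≤ μ) (hμ : μ < lam) :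
    τ lam < τ μ := by
  have hjump_lt : τ lam < τ (lam - ε) :=
    lt_of_le_of_ne (hanti (sub_nonneg.2 hεlam) (Set.mem_Ici.2 (by linarith)) (by linarith)) hjump
  refine hjump_lt.trans_le ?_
  rcases le_or_gt μ (lam - ε) with hμε | hμε
  · exact hanti hμ0 (sub_nonneg.2 hεlam) hμε
  · have := hsmall (lam - μ) (by linarith) (by linarith)
    rw [sub_sub_cancel] at this
    exact this.ge

theorem cartier_structure_on_graded_iff_general (p : ℕ) (hp : p.Prime)
    (κ : M →+ M)
    (f : R) (τ : ℚ → Submodule R M)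
    (hdec : ∀ μ ν : ℚ, 0 ≤ μ → μ ≤ ν → τ ν ≤ τ μ)
    (hBS : ∀ μ : ℚ, 0 ≤ μ → ∀ e n : ℕ,
      opApply κ f e n (τ μ) = τ ((μ + n) / (p : ℚ) ^ e))
    (lam : ℚ) (hlam : 0 ≤ lam)
    (ε : ℚ) (hε : 0 < ε) (hεlam : ε ≤ lam)
    (hsmall : ∀ ε' : ℚ, 0 < ε' → ε' ≤ ε → τ (lam - ε') = τ (lam - ε))
    (hjump : τ lam ≠ τ (lam - ε))
    (e : ℕ) (a : ℕ) :
    (opApply κ f e a (τ (lam - ε)) ≤ τ (lam - ε)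
        ∧ opApply κ f e a (τ lam) ≤ τ lam)
      ↔ ⌈lam * ((p : ℚ) ^ e - 1)⌉ ≤ (a : ℤ) := by
  have hanti : AntitoneOn τ (Set.Ici 0) := fun μ hμ ν _ hμν => hdec μ ν hμ hμν
  have hq : 0 < (p : ℚ) ^ e := pow_pos (Nat.cast_pos.2 hp.pos) e
  have hq1 : 1 ≤ (p : ℚ) ^ e := one_le_pow₀ (Nat.one_le_cast.2 hp.one_le)
  have hceil : ⌈lam * ((p : ℚ) ^ e - 1)⌉ ≤ (a : ℤ) ↔ lam * ((p : ℚ) ^ e - 1) ≤ a := by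
    rw [Int.ceil_le, Int.cast_natCast]
  rw [hBS _ (sub_nonneg.2 hεlam), hBS _ hlam, hceil, ← le_add_div_iff_mul_sub_one_le _ hq]
  constructor
  · rintro ⟨-, hle⟩
    by_contra! hlt
    exact (hanti.lt_of_lt_of_jump hε hεlam hsmall hjump (by positivity) hlt).not_ge hle
  · intro h
    have hε_mul : (lam - ε) * ((p : ℚ) ^ e - 1) ≤ a :=
      le_trans (mul_le_mul_of_nonneg_right (by linarith) (by linarith))
        ((le_add_div_iff_mul_sub_one_le _ hq).1 h)
    exact ⟨hanti (sub_nonneg.2 hεlam) (Set.mem_Ici.2 (by positivity))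
        ((le_add_div_iff_mul_sub_one_le _ hq).2 hε_mul),
      hanti hlam (Set.mem_Ici.2 (by positivity)) h⟩

/-- Lemma 2.3: `κ^e f^{a}` induces a well-defined Cartier structure on
`Gr^λ M = τ(M, f^{λ−ε})/τ(M, f^λ)` (for `0 < ε ≪ 1`) iff `a ≥ ⌈λ(p^e − 1)⌉`.
The test module filtration `τ` is axiomatized by: it is decreasing, it is an
`F`-jumping filtration at `λ` (`τ(λ−ε') = τ(λ−ε)` for all `0 < ε' ≤ ε`,
`τ(λ) ≠ τ(λ−ε)`), and it satisfies the combined Briançon–Skoda identity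
`κ^e f^n τ(M,f^μ) = τ(M, f^{(μ+n)/p^e})`. -/
theorem cartier_structure_on_graded_iff (p : ℕ) (hp : p.Prime) [CharP R p]
    (κ : M →+ M) (hκ : ∀ (r : R) (m : M), κ (r ^ p • m) = r • κ m)
    (f : R) (τ : ℚ → Submodule R M)
    (hdec : ∀ μ ν : ℚ, 0 ≤ μ → μ ≤ ν → τ ν ≤ τ μ)
    (hBS : ∀ μ : ℚ, 0 ≤ μ → ∀ e n : ℕ,
      opApply κ f e n (τ μ) = τ ((μ + n) / (p : ℚ) ^ e))
    (lam : ℚ) (hlam : 0 ≤ lam)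
    (ε : ℚ) (hε : 0 < ε) (hεlam : ε ≤ lam)
    (hsmall : ∀ ε' : ℚ, 0 < ε' → ε' ≤ ε → τ (lam - ε') = τ (lam - ε))
    (hjump : τ lam ≠ τ (lam - ε))
    (e : ℕ) (he : 1 ≤ e) (a : ℕ) :
    (opApply κ f e a (τ (lam - ε)) ≤ τ (lam - ε)
        ∧ opApply κ f e a (τ lam) ≤ τ lam)
      ↔ ⌈lam * ((p : ℚ) ^ e - 1)⌉ ≤ (a : ℤ) :=
  cartier_structure_on_graded_iff_general p hp κ f τ hdec hBS lam hlam ε hε hεlam hsmall hjump e a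
end

section
/- Let R be essentially of finite type over an F-finite field, (M, κ) a Cartier module, f ∈ R, and λ an F-jumping number of the test module filtration of M along f. The Cartier structure on Gr^λ M given by κ^e f^{a_e(λ)} (with a_e(λ) ≥ ⌈λ(p^e−1)⌉) is non-nilpotent if and only if a_e(λ) = λ(p^e−1) and λ(p^e−1) ∈ ℤ. In particular, if p divides the denominator of λ, all these Cartier structures are nilpotent. -/
/-!
Write `q = p^e`. By the Briançon–Skoda identity, the iterates of `κ^e f^a` on `τ(M, f^μ)` are
`τ(M, f^{μ_N})` with `μ_{N+1} = (μ_N + a) / q`, an affine recursion with attracting fixed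
point `c = a / (q - 1) ≥ λ`, so `μ_N = c - (c - μ_0) / q^N`. If `c > λ` the iterates starting
at `λ - ε` eventually exceed `λ`, giving nilpotence. If `c = λ` they are `λ - ε / q^N`, which
stay in the interval where the filtration is constant, so the jump at `λ` is never crossed.
Finally `c = λ` forces `λ (q - 1) ∈ ℤ`, hence `den λ ∣ p^e - 1`, which is prime to `p`.
-/

open Function

variable {R : Type*} [CommRing R] {M : Type*} [AddCommGroup M] [Module R M]

lemma iterate_add_div_eq {q : ℚ} (hq0 : q ≠ 0) (hq1 : q ≠ 1) (n μ : ℚ) (N : ℕ) :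
    (fun x => (x + n) / q)^[N] μ = n / (q - 1) - (n / (q - 1) - μ) / q ^ N := by
  have hq : q - 1 ≠ 0 := sub_ne_zero.mpr hq1
  induction N with
  | zero => simp
  | succ N ih =>
    rw [iterate_succ_apply', ih]
    field_simp
    ring

lemma mul_pow_sub_one_ne_intCast {p : ℕ} (hp : p.Prime) {e : ℕ} (he : e ≠ 0) {lam : ℚ}
    (hden : p ∣ lam.den) (k : ℤ) : lam * ((p : ℚ) ^ e - 1) ≠ k := by
  intro hk
  have hpe : ((p : ℤ) ^ e - 1 : ℤ) ≠ 0 := by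
    have : (1 : ℤ) < (p : ℤ) ^ e := one_lt_pow₀ (by exact_mod_cast hp.one_lt) he
    omega
  have hlam : lam = Rat.divInt k ((p : ℤ) ^ e - 1) := by
    rw [Rat.divInt_eq_div, ← hk]
    push_cast
    rw [mul_div_cancel_right₀ _ (by exact_mod_cast hpe)]
  have hp_dvd : (p : ℤ) ∣ (p : ℤ) ^ e - 1 :=
    (Int.natCast_dvd_natCast.mpr hden).trans (hlam ▸ Rat.den_dvd _ _)
  have hp_one : (p : ℤ) ∣ 1 := by
    simpa using dvd_sub (dvd_pow_self (p : ℤ) he) hp_dvd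
  exact (Nat.prime_iff_prime_int.mp hp).not_dvd_one hp_one

section Filtration

variable {κ : M →+ M} {f : R} {τ : ℚ → Submodule R M} {e n : ℕ} {q : ℚ}

lemma iterate_opApply_eq
    (hBS : ∀ μ : ℚ, 0 ≤ μ → opApply κ f e n (τ μ) = τ ((μ + n) / q)) (hq : 0 < q)
    {μ : ℚ} (hμ : 0 ≤ μ) (N : ℕ) :
    (opApply κ f e n)^[N] (τ μ) = τ ((fun x => (x + n) / q)^[N] μ) := by
  have hmaps : Set.MapsTo (fun x : ℚ => (x + n) / q) (Set.Ici 0) (Set.Ici 0) :=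
    fun x (hx : 0 ≤ x) => show 0 ≤ (x + n) / q by positivity
  induction N with
  | zero => rfl
  | succ N ih =>
    rw [iterate_succ_apply', ih, hBS _ (hmaps.iterate N hμ), iterate_succ_apply']

lemma exists_iterate_opApply_le_of_lt (hdec : ∀ μ ν : ℚ, 0 ≤ μ → μ ≤ ν → τ ν ≤ τ μ)
    (hBS : ∀ μ : ℚ, 0 ≤ μ → opApply κ f e n (τ μ) = τ ((μ + n) / q)) (hq : 1 < q)
    {lam μ : ℚ} (hlam : 0 ≤ lam) (hμ : 0 ≤ μ) (hlt : lam * (q - 1) < n) :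
    ∃ N : ℕ, (opApply κ f e n)^[N] (τ μ) ≤ τ lam := by
  set c : ℚ := n / (q - 1)
  have hc : lam < c := (lt_div_iff₀ (by linarith)).mpr hlt
  obtain ⟨N, hN⟩ := pow_unbounded_of_one_lt ((c - μ) / (c - lam)) hq
  refine ⟨N, ?_⟩
  rw [iterate_opApply_eq hBS (by linarith) hμ, iterate_add_div_eq (by linarith) hq.ne']
  have hgap : (c - μ) / q ^ N ≤ c - lam := by
    rw [div_lt_iff₀ (sub_pos.mpr hc)] at hN
    rw [div_le_iff₀ (by positivity)]
    linarith [mul_comm (q ^ N) (c - lam)]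
  exact hdec lam _ hlam (by linarith)

lemma not_iterate_opApply_le_of_eq (hdec : ∀ μ ν : ℚ, 0 ≤ μ → μ ≤ ν → τ ν ≤ τ μ)
    (hBS : ∀ μ : ℚ, 0 ≤ μ → opApply κ f e n (τ μ) = τ ((μ + n) / q)) (hq : 1 < q)
    {lam ε : ℚ} (hε : 0 < ε) (hεlam : ε ≤ lam)
    (hsmall : ∀ ε' : ℚ, 0 < ε' → ε' ≤ ε → τ (lam - ε') = τ (lam - ε))
    (hjump : τ lam ≠ τ (lam - ε)) (heq : (n : ℚ) = lam * (q - 1)) (N : ℕ) :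
    ¬ (opApply κ f e n)^[N] (τ (lam - ε)) ≤ τ lam := by
  have hfix : (n : ℚ) / (q - 1) = lam := by rw [heq, mul_div_cancel_right₀ _ (by linarith)]
  have hqN : 1 ≤ q ^ N := one_le_pow₀ hq.le
  rw [iterate_opApply_eq hBS (by linarith) (by linarith),
    iterate_add_div_eq (by linarith) hq.ne', hfix, sub_sub_cancel,
    hsmall _ (div_pos hε (by positivity)) (div_le_self hε.le hqN)]
  exact fun hle => hjump (le_antisymm (hdec _ _ (by linarith) (by linarith)) hle)

end Filtration

theorem graded_cartier_nonnilpotent_iff_general (p : ℕ) (hp : p.Prime)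
    (κ : M →+ M)
    (f : R) (τ : ℚ → Submodule R M)
    (hdec : ∀ μ ν : ℚ, 0 ≤ μ → μ ≤ ν → τ ν ≤ τ μ)
    (hBS : ∀ μ : ℚ, 0 ≤ μ → ∀ e n : ℕ,
      opApply κ f e n (τ μ) = τ ((μ + n) / (p : ℚ) ^ e))
    (lam : ℚ) (hlam : 0 ≤ lam)
    (ε : ℚ) (hε : 0 < ε) (hεlam : ε ≤ lam)
    (hsmall : ∀ ε' : ℚ, 0 < ε' → ε' ≤ ε → τ (lam - ε') = τ (lam - ε))
    (hjump : τ lam ≠ τ (lam - ε))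
    (e : ℕ) (he : 1 ≤ e) (a : ℕ) (ha : ⌈lam * ((p : ℚ) ^ e - 1)⌉ ≤ (a : ℤ)) :
    ((¬ ∃ N : ℕ, (opApply κ f e a)^[N] (τ (lam - ε)) ≤ τ lam)
        ↔ ((a : ℚ) = lam * ((p : ℚ) ^ e - 1)
            ∧ ∃ k : ℤ, lam * ((p : ℚ) ^ e - 1) = k))
    ∧ (p ∣ lam.den → ∃ N : ℕ, (opApply κ f e a)^[N] (τ (lam - ε)) ≤ τ lam) := by
  have he0 : e ≠ 0 := Nat.one_le_iff_ne_zero.mp he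
  have hq : 1 < (p : ℚ) ^ e := one_lt_pow₀ (by exact_mod_cast hp.one_lt) he0
  have hBS' := fun μ hμ => hBS μ hμ e a
  have hle : lam * ((p : ℚ) ^ e - 1) ≤ a := by exact_mod_cast Int.ceil_le.mp ha
  rcases hle.lt_or_eq with hlt | heq
  · have hnilp :=
      exists_iterate_opApply_le_of_lt hdec hBS' hq hlam (μ := lam - ε) (by linarith) hlt
    exact ⟨⟨fun h => (h hnilp).elim, fun h => (hlt.ne' h.1).elim⟩, fun _ => hnilp⟩
  · refine ⟨iff_of_true ?_ ⟨heq.symm, a, heq⟩,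
      fun hden => (mul_pow_sub_one_ne_intCast hp he0 hden a heq).elim⟩
    exact fun ⟨N, hN⟩ =>
      not_iterate_opApply_le_of_eq hdec hBS' hq hε hεlam hsmall hjump heq.symm N hN

/-- Theorem 2.4: for an `F`-jumping number `λ`, the Cartier structure `κ^e f^{a}`
(with `a ≥ ⌈λ(p^e−1)⌉`) on `Gr^λ M = τ(M, f^{λ−ε})/τ(M, f^λ)` is non-nilpotent iff
`a = λ(p^e−1)` and `λ(p^e−1) ∈ ℤ`. In particular, if `p` divides the denominator of
`λ`, all these Cartier structures are nilpotent. Nilpotence means some iterate of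
`κ^e f^a` maps `τ(M, f^{λ−ε})` into `τ(M, f^λ)`. -/
theorem graded_cartier_nonnilpotent_iff (p : ℕ) (hp : p.Prime) [CharP R p]
    (κ : M →+ M) (hκ : ∀ (r : R) (m : M), κ (r ^ p • m) = r • κ m)
    (f : R) (τ : ℚ → Submodule R M)
    (hdec : ∀ μ ν : ℚ, 0 ≤ μ → μ ≤ ν → τ ν ≤ τ μ)
    (hBS : ∀ μ : ℚ, 0 ≤ μ → ∀ e n : ℕ,
      opApply κ f e n (τ μ) = τ ((μ + n) / (p : ℚ) ^ e))
    (lam : ℚ) (hlam : 0 ≤ lam)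
    (ε : ℚ) (hε : 0 < ε) (hεlam : ε ≤ lam)
    (hsmall : ∀ ε' : ℚ, 0 < ε' → ε' ≤ ε → τ (lam - ε') = τ (lam - ε))
    (hjump : τ lam ≠ τ (lam - ε))
    (e : ℕ) (he : 1 ≤ e) (a : ℕ) (ha : ⌈lam * ((p : ℚ) ^ e - 1)⌉ ≤ (a : ℤ)) :
    ((¬ ∃ N : ℕ, (opApply κ f e a)^[N] (τ (lam - ε)) ≤ τ lam)
        ↔ ((a : ℚ) = lam * ((p : ℚ) ^ e - 1)
            ∧ ∃ k : ℤ, lam * ((p : ℚ) ^ e - 1) = k))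
    ∧ (p ∣ lam.den → ∃ N : ℕ, (opApply κ f e a)^[N] (τ (lam - ε)) ≤ τ lam) :=
  graded_cartier_nonnilpotent_iff_general p hp κ f τ hdec hBS lam hlam ε hε hεlam hsmall hjump e he
    a ha
end
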